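/- arXiv:1607.05815 — 2 statements merged into one kernel-verified Lean document; each statement's English description precedes it below -/
import Mathlib

section
/- Let T be a pure contraction on a complex Hilbert space H and let Π : H → ℓ²(ℕ, H) be the canonical isometry (Π h)(n) = D_T T*ⁿ h, with range Q. Suppose X and Y are commuting contractions on ℓ²(ℕ, H) such that Q is invariant under X* and under Y*, and Π* (X Y) Π = Π* S Π, where S is the unilateral shift. Then T1 := Π* X Π and T2 := Π* Y Π are commuting contractions on H and T = T1 T2. -/
open ContinuousLinearMap
open scoped ENNReal

set_option linter.unusedSectionVars false

noncomputable section

section ShiftOperator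

variable {E : Type*} [NormedAddCommGroup E] [InnerProductSpace ℂ E]

/-- The right-shifted sequence: `(shiftFun f) 0 = 0`, `(shiftFun f) (n+1) = f n`. -/
def shiftFun (f : ℕ → E) : ℕ → E
  | 0 => 0
  | (n + 1) => f n

lemma summable_of_lp (f : lp (fun _ : ℕ => E) 2) :
    Summable fun n => ‖(f : ∀ _ : ℕ, E) n‖ ^ (2 : ℝ) := by
  have h := lp.memℓp f
  have h2 : (0 : ℝ) < (2 : ℝ≥0∞).toReal := by norm_num
  simpa using (memℓp_gen_iff h2).mp h

lemma summable_shiftFun (f : lp (fun _ : ℕ => E) 2) :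
    Summable fun n => ‖shiftFun (f : ∀ _ : ℕ, E) n‖ ^ (2 : ℝ) := by
  have h1 : Summable fun n => ‖shiftFun (f : ∀ _ : ℕ, E) (n + 1)‖ ^ (2 : ℝ) := by
    simpa [shiftFun] using summable_of_lp f
  exact (summable_nat_add_iff
    (f := fun n => ‖shiftFun ((f : ∀ _ : ℕ, E)) n‖ ^ (2 : ℝ)) 1).mp h1

lemma memℓp_shiftFun (f : lp (fun _ : ℕ => E) 2) : Memℓp (shiftFun (f : ∀ _ : ℕ, E)) 2 := by
  apply memℓp_gen
  simpa using summable_shiftFun f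

lemma norm_shift_eq (f : lp (fun _ : ℕ => E) 2)
    (g : lp (fun _ : ℕ => E) 2) (hg : (g : ∀ _ : ℕ, E) = shiftFun (f : ∀ _ : ℕ, E)) :
    ‖g‖ = ‖f‖ := by
  have h2 : (0 : ℝ) < (2 : ℝ≥0∞).toReal := by norm_num
  rw [lp.norm_eq_tsum_rpow h2 f, lp.norm_eq_tsum_rpow h2 g]
  congr 1
  have htsum : (∑' n, ‖shiftFun (f : ∀ _ : ℕ, E) n‖ ^ (2 : ℝ)) =
      ∑' n, ‖(f : ∀ _ : ℕ, E) n‖ ^ (2 : ℝ) := by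
    rw [(summable_shiftFun f).tsum_eq_zero_add]
    simp [shiftFun]
  simp only [hg]
  simpa using htsum

/-- The unilateral shift `S` on `ℓ²(ℕ, E)`: `(S f)(0) = 0` and `(S f)(n) = f (n-1)` for
`n ≥ 1`. -/
def shiftOp (E : Type*) [NormedAddCommGroup E] [InnerProductSpace ℂ E] :
    lp (fun _ : ℕ => E) 2 →L[ℂ] lp (fun _ : ℕ => E) 2 :=
  LinearMap.mkContinuous
    { toFun := fun f => ⟨shiftFun (f : ∀ _ : ℕ, E), memℓp_shiftFun f⟩
      map_add' := by
        intro f g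
        apply lp.ext
        funext n
        cases n <;> simp [shiftFun, lp.coeFn_add, Pi.add_apply] <;> erw [Pi.add_apply] <;> simp [shiftFun]
      map_smul' := by
        intro c f
        apply lp.ext
        funext n
        cases n <;> simp [shiftFun, lp.coeFn_smul, Pi.smul_apply] }
    1
    (by
      intro f
      rw [one_mul]
      exact le_of_eq (norm_shift_eq f _ rfl))

@[simp] lemma shiftOp_apply_zero (f : lp (fun _ : ℕ => E) 2) :
    (shiftOp E f : ∀ _ : ℕ, E) 0 = 0 := rfl

@[simp] lemma shiftOp_apply_succ (f : lp (fun _ : ℕ => E) 2) (n : ℕ) :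
    (shiftOp E f : ∀ _ : ℕ, E) (n + 1) = (f : ∀ _ : ℕ, E) n := rfl

end ShiftOperator

section Defect

variable {H : Type*} [NormedAddCommGroup H] [InnerProductSpace ℂ H] [CompleteSpace H]

/-- The defect operator `D_T = (I - T T*)^{1/2}` of a contraction `T`. -/
def defect (T : H →L[ℂ] H) : H →L[ℂ] H :=
  CFC.sqrt (1 - T * adjoint T)

end Defect

/-!
Purity makes `Γ` an isometry: `‖D_T T*ⁿ h‖² = ‖T*ⁿ h‖² - ‖T*ⁿ⁺¹ h‖²` telescopes to `‖h‖²`.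
Since `(Γ h)(n + 1) = (Γ (T* h))(n)`, `Γ` intertwines `T*` with `S*`, so `Γ* S Γ = T`.
If `ran Γ` is invariant under `X*`, then `Γ Γ* X* Γ = X* Γ`, i.e. `(Γ* X Γ) Γ* = Γ* X`, hence
`(Γ* X Γ)(Γ* Z Γ) = Γ* X Z Γ` for every `Z`. With `Z = Y` this gives `T₁ T₂ = Γ* X Y Γ = T`
for `T₁ = Γ* X Γ`, `T₂ = Γ* Y Γ`; swapping `X` and `Y` gives `T₂ T₁ = Γ* Y X Γ = T₁ T₂`.
-/

section CStarAlgebra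

variable {A : Type*} [CStarAlgebra A] [PartialOrder A] [StarOrderedRing A]

lemma CStarAlgebra.mul_star_le_one_of_norm_le_one {a : A} (ha : ‖a‖ ≤ 1) : a * star a ≤ 1 :=
  (CStarAlgebra.norm_le_one_iff_of_nonneg _ (mul_star_self_nonneg a)).mp <| by
    rw [CStarRing.norm_self_mul_star]
    exact mul_le_one₀ ha (norm_nonneg a) ha

end CStarAlgebra

lemma hasSum_sub_succ_of_antitone {g : ℕ → ℝ} {l : ℝ} (hg : Antitone g)
    (hl : Filter.Tendsto g Filter.atTop (nhds l)) :
    HasSum (fun n => g n - g (n + 1)) (g 0 - l) := by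
  rw [hasSum_iff_tendsto_nat_of_nonneg fun n => sub_nonneg.mpr (hg n.le_succ)]
  simpa only [Finset.sum_range_sub'] using tendsto_const_nhds.sub hl

section Defect

variable {H : Type*} [NormedAddCommGroup H] [InnerProductSpace ℂ H] [CompleteSpace H]
  {T : H →L[ℂ] H}

lemma defect_mul_self (hT : ‖T‖ ≤ 1) : defect T * defect T = 1 - T * adjoint T := by
  rw [defect, ← sq, ← star_eq_adjoint,
    CFC.sq_sqrt _ (sub_nonneg.mpr (CStarAlgebra.mul_star_le_one_of_norm_le_one hT))]

lemma norm_defect_apply_sq (hT : ‖T‖ ≤ 1) (x : H) :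
    ‖defect T x‖ ^ 2 = ‖x‖ ^ 2 - ‖adjoint T x‖ ^ 2 := by
  have hD : adjoint (defect T) = defect T := (CFC.sqrt_nonneg _).isSelfAdjoint.adjoint_eq
  rw [apply_norm_sq_eq_inner_adjoint_left, apply_norm_sq_eq_inner_adjoint_left, hD,
    adjoint_adjoint, ← mul_def, defect_mul_self hT, sub_apply, inner_sub_left, map_sub,
    one_apply_eq_self, inner_self_eq_norm_sq, mul_def]

lemma hasSum_norm_defect_pow_apply_sq (hT : ‖T‖ ≤ 1)
    (hpure : ∀ h : H, Filter.Tendsto (fun n : ℕ => ((adjoint T) ^ n) h) Filter.atTop (nhds 0))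
    (h : H) : HasSum (fun n => ‖defect T ((adjoint T ^ n) h)‖ ^ 2) (‖h‖ ^ 2) := by
  have hT' : ‖adjoint T‖ ≤ 1 := by rwa [LinearIsometryEquiv.norm_map]
  have hsucc (n : ℕ) : (adjoint T ^ (n + 1)) h = adjoint T ((adjoint T ^ n) h) := by
    rw [pow_succ', mul_apply_eq_comp]
  have hanti : Antitone fun n => ‖(adjoint T ^ n) h‖ ^ 2 := by
    refine antitone_nat_of_succ_le fun n => ?_
    rw [hsucc]
    gcongr
    exact (le_opNorm _ _).trans (mul_le_of_le_one_left (norm_nonneg _) hT')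
  have hzero : Filter.Tendsto (fun n => ‖(adjoint T ^ n) h‖ ^ 2) Filter.atTop (nhds 0) := by
    simpa using (hpure h).norm.pow 2
  simpa [norm_defect_apply_sq hT, hsucc] using hasSum_sub_succ_of_antitone hanti hzero

lemma adjoint_comp_self_eq_one_of_apply_eq_defect (hT : ‖T‖ ≤ 1)
    (hpure : ∀ h : H, Filter.Tendsto (fun n : ℕ => ((adjoint T) ^ n) h) Filter.atTop (nhds 0))
    {Γ : H →L[ℂ] lp (fun _ : ℕ => H) 2}
    (hΓ : ∀ (h : H) (n : ℕ), (Γ h : ∀ _ : ℕ, H) n = defect T (((adjoint T) ^ n) h)) :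
    adjoint Γ ∘L Γ = 1 := by
  refine (norm_map_iff_adjoint_comp_self Γ).mp fun h => ?_
  have hΓh := lp.hasSum_norm (p := 2) (by norm_num) (Γ h)
  simp only [ENNReal.toReal_ofNat, Real.rpow_two, hΓ] at hΓh
  exact (pow_left_inj₀ (norm_nonneg _) (norm_nonneg _) two_ne_zero).mp
    (hΓh.unique (hasSum_norm_defect_pow_apply_sq hT hpure h))

end Defect

section Shift

variable {E : Type*} [NormedAddCommGroup E] [InnerProductSpace ℂ E]

lemma inner_shiftOp_right (f g : lp (fun _ : ℕ => E) 2) :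
    inner ℂ f (shiftOp E g) = ∑' n, inner ℂ ((f : ∀ _ : ℕ, E) (n + 1)) ((g : ∀ _ : ℕ, E) n) := by
  have hs : Summable fun n => inner ℂ ((f : ∀ _ : ℕ, E) n) ((shiftOp E g : ∀ _ : ℕ, E) n) :=
    lp.summable_inner f (shiftOp E g)
  rw [lp.inner_eq_tsum, hs.tsum_eq_zero_add]
  simp

lemma adjoint_shiftOp_comp_eq [CompleteSpace E] {F : Type*} [NormedAddCommGroup F]
    [NormedSpace ℂ F] {Γ : F →L[ℂ] lp (fun _ : ℕ => E) 2} {A : F →L[ℂ] F}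
    (hΓ : ∀ (x : F) (n : ℕ), (Γ x : ∀ _ : ℕ, E) (n + 1) = (Γ (A x) : ∀ _ : ℕ, E) n) :
    adjoint (shiftOp E) ∘L Γ = Γ ∘L A := by
  ext x : 1
  refine ext_inner_right ℂ fun g => ?_
  rw [comp_apply, adjoint_inner_left, inner_shiftOp_right, comp_apply, lp.inner_eq_tsum]
  simp only [hΓ]

end Shift

section Compression

variable {𝕜 E F : Type*} [RCLike 𝕜] [NormedAddCommGroup E] [InnerProductSpace 𝕜 E]
  [CompleteSpace E] [NormedAddCommGroup F] [InnerProductSpace 𝕜 F] [CompleteSpace F]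
  {V : E →L[𝕜] F}

def compression (V : E →L[𝕜] F) (A : F →L[𝕜] F) : E →L[𝕜] E :=
  adjoint V ∘L (A ∘L V)

lemma norm_compression_le (hV : ‖V‖ ≤ 1) (A : F →L[𝕜] F) : ‖compression V A‖ ≤ ‖A‖ :=
  calc ‖compression V A‖ ≤ ‖adjoint V‖ * (‖A‖ * ‖V‖) :=
        (opNorm_comp_le _ _).trans (mul_le_mul_of_nonneg_left (opNorm_comp_le _ _) (norm_nonneg _))
    _ ≤ ‖A‖ := by
        rw [LinearIsometryEquiv.norm_map]
        exact mul_le_of_le_one_left (by positivity) hV |>.trans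
          (mul_le_of_le_one_right (norm_nonneg _) hV)

lemma compression_eq_adjoint (hV : adjoint V ∘L V = 1) {B : F →L[𝕜] F} {A : E →L[𝕜] E}
    (h : adjoint B ∘L V = V ∘L A) : compression V B = adjoint A := by
  have : adjoint (compression V B) = A := by
    rw [compression, adjoint_comp, adjoint_comp, adjoint_adjoint, comp_assoc, h, ← comp_assoc,
      hV, one_def, id_comp]
  rw [← this, adjoint_adjoint]

lemma compression_mul_compression (hV : adjoint V ∘L V = 1) {A : F →L[𝕜] F}
    (hA : ∀ x : E, ∃ y : E, adjoint A (V x) = V y) (B : F →L[𝕜] F) :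
    compression V A * compression V B = compression V (A ∘L B) := by
  have hinv : V ∘L (adjoint V ∘L (adjoint A ∘L V)) = adjoint A ∘L V := by
    ext x : 1
    obtain ⟨y, hy⟩ := hA x
    simp only [comp_apply, hy, ← comp_apply (adjoint V) V, hV, one_apply_eq_self]
  have hproj : compression V A ∘L adjoint V = adjoint V ∘L A := by
    simpa only [compression, adjoint_comp, adjoint_adjoint, comp_assoc] using congrArg adjoint hinv
  rw [mul_def]
  simp only [compression, ← comp_assoc] at hproj ⊢
  rw [hproj]

end Compression

/-- Let `T` be a pure contraction, `Γ : H → ℓ²(ℕ, H)` the canonical isometry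
`(Γ h)(n) = D_T T*ⁿ h` with range `Q`. If `X, Y` are commuting contractions on
`ℓ²(ℕ, H)` with `Q` invariant under `X*` and `Y*`, and `Γ* (X Y) Γ = Γ* S Γ`, then
`T₁ = Γ* X Γ` and `T₂ = Γ* Y Γ` are commuting contractions on `H` with `T = T₁ T₂`. -/
theorem factorization_from_compressions
    {H : Type*} [NormedAddCommGroup H] [InnerProductSpace ℂ H] [CompleteSpace H]
    (T : H →L[ℂ] H) (hT : ‖T‖ ≤ 1)
    (hpure : ∀ h : H,
      Filter.Tendsto (fun n : ℕ => ((adjoint T) ^ n) h) Filter.atTop (nhds 0))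
    (Γ : H →L[ℂ] lp (fun _ : ℕ => H) 2)
    (hΓ : ∀ (h : H) (n : ℕ), (Γ h : ∀ _ : ℕ, H) n = defect T (((adjoint T) ^ n) h))
    (X Y : lp (fun _ : ℕ => H) 2 →L[ℂ] lp (fun _ : ℕ => H) 2)
    (hX : ‖X‖ ≤ 1) (hY : ‖Y‖ ≤ 1) (hXY : Commute X Y)
    (hQX : ∀ h : H, ∃ h' : H, adjoint X (Γ h) = Γ h')
    (hQY : ∀ h : H, ∃ h' : H, adjoint Y (Γ h) = Γ h')
    (hfact : adjoint Γ ∘L ((X ∘L Y) ∘L Γ) = adjoint Γ ∘L (shiftOp H ∘L Γ)) :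
    ‖adjoint Γ ∘L (X ∘L Γ)‖ ≤ 1 ∧ ‖adjoint Γ ∘L (Y ∘L Γ)‖ ≤ 1 ∧
    Commute (adjoint Γ ∘L (X ∘L Γ)) (adjoint Γ ∘L (Y ∘L Γ)) ∧
    T = (adjoint Γ ∘L (X ∘L Γ)) * (adjoint Γ ∘L (Y ∘L Γ)) := by
  have hΓ_iso : adjoint Γ ∘L Γ = 1 := adjoint_comp_self_eq_one_of_apply_eq_defect hT hpure hΓ
  have hΓ_norm : ‖Γ‖ ≤ 1 := Γ.opNorm_le_bound zero_le_one fun h => by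
    rw [one_mul, (norm_map_iff_adjoint_comp_self Γ).mpr hΓ_iso h]
  have hS : compression Γ (shiftOp H) = T := by
    refine (compression_eq_adjoint hΓ_iso (adjoint_shiftOp_comp_eq fun h n => ?_)).trans
      (adjoint_adjoint T)
    rw [hΓ, hΓ, pow_succ, mul_apply_eq_comp]
  have hXY_eq := compression_mul_compression hΓ_iso hQX Y
  have hYX_eq := compression_mul_compression hΓ_iso hQY X
  refine ⟨(norm_compression_le hΓ_norm X).trans hX, (norm_compression_le hΓ_norm Y).trans hY,
    ?_, ?_⟩
  · change compression Γ X * compression Γ Y = compression Γ Y * compression Γ X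
    rw [hXY_eq, hYX_eq]
    exact congrArg (compression Γ) hXY.eq
  · calc T = compression Γ (shiftOp H) := hS.symm
      _ = compression Γ (X ∘L Y) := hfact.symm
      _ = compression Γ X * compression Γ Y := hXY_eq.symm
end
end

section
/- Let E be a complex Hilbert space, U a unitary operator on E and P an orthogonal projection on E. Let W_Φ and W_Ψ be the operators on ℓ²(ℕ, E) given by (W_Φ f)(0) = P U* f(0), (W_Φ f)(n) = P U* f(n) + (I−P) U* f(n−1) for n ≥ 1, and (W_Ψ f)(0) = U(I−P) f(0), (W_Ψ f)(n) = U(I−P) f(n) + U P f(n−1) for n ≥ 1. Then W_Φ W_Ψ = W_Ψ W_Φ = S, where S is the unilateral shift on ℓ²(ℕ, E). -/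
open ContinuousLinearMap
open scoped ENNReal

set_option linter.unusedSectionVars false

noncomputable section

/-- `W` is the analytic (degree-one) Toeplitz operator on `ℓ²(ℕ, E)` with symbol
`φ(z) = a + z b`, i.e. `(W f)(0) = a (f 0)` and `(W f)(n) = a (f n) + b (f (n-1))`
for `n ≥ 1`. -/
def IsToeplitz {E : Type*} [NormedAddCommGroup E] [InnerProductSpace ℂ E]
    (a b : E →L[ℂ] E)
    (W : lp (fun _ : ℕ => E) 2 →L[ℂ] lp (fun _ : ℕ => E) 2) : Prop :=
  ∀ f : lp (fun _ : ℕ => E) 2,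
    (W f : ∀ _ : ℕ, E) 0 = a ((f : ∀ _ : ℕ, E) 0) ∧
    ∀ n : ℕ, (W f : ∀ _ : ℕ, E) (n + 1) =
      a ((f : ∀ _ : ℕ, E) (n + 1)) + b ((f : ∀ _ : ℕ, E) n)

/-!
Both operators are analytic Toeplitz operators of degree one, and these compose like their
symbols. As `P` is idempotent and `U` unitary,
`Φ Ψ = (P + z (I - P)) ((I - P) + z P) = z` and
`Ψ Φ = U ((I - P) + z P) (P + z (I - P)) U* = z U U* = z`,
and the Toeplitz operator with symbol `z` is the shift.
-/

namespace IsToeplitz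

variable {E : Type*} [NormedAddCommGroup E] [InnerProductSpace ℂ E] {a b c d : E →L[ℂ] E}
  {W V : lp (fun _ : ℕ => E) 2 →L[ℂ] lp (fun _ : ℕ => E) 2}

lemma apply (hW : IsToeplitz a b W) (f : lp (fun _ : ℕ => E) 2) (n : ℕ) :
    (W f : ∀ _ : ℕ, E) n = a ((f : ∀ _ : ℕ, E) n) + b ((shiftOp E f : ∀ _ : ℕ, E) n) := by
  cases n with
  | zero => rw [(hW f).1, shiftOp_apply_zero, map_zero, add_zero]
  | succ n => rw [(hW f).2 n, shiftOp_apply_succ]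

lemma comp_shiftOp (hW : IsToeplitz a b W) : W ∘L shiftOp E = shiftOp E ∘L W := by
  ext f n
  cases n with
  | zero => simp only [comp_apply, (hW _).1, shiftOp_apply_zero, map_zero]
  | succ n => rw [comp_apply, comp_apply, (hW _).2 n, shiftOp_apply_succ, shiftOp_apply_succ,
      hW.apply]

/-- The hypotheses say `(a + z b) (c + z d) = z`. -/
theorem comp_eq_shiftOp (hW : IsToeplitz a b W) (hV : IsToeplitz c d V) (h₀ : a * c = 0)
    (h₁ : a * d + b * c = 1) (h₂ : b * d = 0) : W ∘L V = shiftOp E := by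
  ext f n
  set S := shiftOp E
  have hVS : S (V f) = V (S f) := (DFunLike.congr_fun hV.comp_shiftOp f).symm
  calc (W (V f) : ∀ _ : ℕ, E) n
      = a ((V f : ∀ _ : ℕ, E) n) + b ((V (S f) : ∀ _ : ℕ, E) n) := by
        rw [hW.apply, hVS]
    _ = (a * c) ((f : ∀ _ : ℕ, E) n) + (a * d + b * c) ((S f : ∀ _ : ℕ, E) n)
          + (b * d) ((S (S f) : ∀ _ : ℕ, E) n) := by
        simp only [hV.apply, map_add, add_apply, mul_apply_eq_comp]
        abel
    _ = (S f : ∀ _ : ℕ, E) n := by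
        rw [h₀, h₁, h₂, zero_apply, zero_apply, one_apply_eq_self, zero_add, add_zero]

end IsToeplitz

lemma mul_mul_mul_assoc {G : Type*} [Semigroup G] (a b c d : G) :
    a * b * (c * d) = a * (b * c) * d := by
  simp only [mul_assoc]

theorem bcl_multipliers_factor_shift_general
    {E : Type*} [NormedAddCommGroup E] [InnerProductSpace ℂ E] [CompleteSpace E]
    (U P : E →L[ℂ] E)
    (hU₁ : adjoint U * U = 1) (hU₂ : U * adjoint U = 1)
    (hP₂ : P * P = P)
    (WΦ WΨ : lp (fun _ : ℕ => E) 2 →L[ℂ] lp (fun _ : ℕ => E) 2)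
    (hWΦ : IsToeplitz (P ∘L adjoint U) ((1 - P) ∘L adjoint U) WΦ)
    (hWΨ : IsToeplitz (U ∘L (1 - P)) (U ∘L P) WΨ) :
    WΦ ∘L WΨ = shiftOp E ∧ WΨ ∘L WΦ = shiftOp E := by
  have hP : IsIdempotentElem P := hP₂
  simp only [← mul_def] at hWΦ hWΨ
  constructor
  · refine hWΦ.comp_eq_shiftOp hWΨ ?_ ?_ ?_ <;>
      simp only [mul_mul_mul_assoc, hU₁, mul_one, hP.eq, hP.one_sub.eq, hP.mul_one_sub_self,
        hP.one_sub_mul_self, add_sub_cancel]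
  · refine hWΨ.comp_eq_shiftOp hWΦ ?_ ?_ ?_ <;>
      simp only [mul_mul_mul_assoc, hP.eq, hP.one_sub.eq, hP.mul_one_sub_self,
        hP.one_sub_mul_self, mul_zero, zero_mul]
    rw [← add_mul, ← mul_add, sub_add_cancel, mul_one, hU₂]

/-- For a unitary `U` and an orthogonal projection `P` on a complex Hilbert space `E`,
the multiplication operators `W_Φ` and `W_Ψ` on `ℓ²(ℕ, E)` with symbols
`Φ(z) = (P + z(I−P)) U*` and `Ψ(z) = U((I−P) + z P)` satisfy
`W_Φ W_Ψ = W_Ψ W_Φ = S`, where `S` is the unilateral shift. -/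
theorem bcl_multipliers_factor_shift
    {E : Type*} [NormedAddCommGroup E] [InnerProductSpace ℂ E] [CompleteSpace E]
    (U P : E →L[ℂ] E)
    (hU₁ : adjoint U * U = 1) (hU₂ : U * adjoint U = 1)
    (hP₁ : IsSelfAdjoint P) (hP₂ : P * P = P)
    (WΦ WΨ : lp (fun _ : ℕ => E) 2 →L[ℂ] lp (fun _ : ℕ => E) 2)
    (hWΦ : IsToeplitz (P ∘L adjoint U) ((1 - P) ∘L adjoint U) WΦ)
    (hWΨ : IsToeplitz (U ∘L (1 - P)) (U ∘L P) WΨ) :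
    WΦ ∘L WΨ = shiftOp E ∧ WΨ ∘L WΦ = shiftOp E :=
  bcl_multipliers_factor_shift_general U P hU₁ hU₂ hP₂ WΦ WΨ hWΦ hWΨ
end
end
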